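/- Let S be a strategy profile of the Sum version of the network creation game that is a Sum greedy equilibrium and whose induced graph T is a tree. Fix an agent u, let T^u be the forest obtained from T by removing all edges owned by u (the edges {u,w} with w ∈ S_u), and let F^u be the set of components of T^u other than the one containing u. Then agent u's current strategy S_u has minimum cost among all of agent u's strategies that buy exactly one edge into each component of F^u and no other edges. -/

import Mathlib

open scoped Classical

/-- The simple graph induced by a strategy profile: `{u,v}` is an edge
iff `u ∈ S v` or `v ∈ S u`. -/
def indGraph {V : Type*} (S : V → Finset V) : SimpleGraph V where
  Adj u v := u ≠ v ∧ (u ∈ S v ∨ v ∈ S u)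
  symm := ⟨fun u v h => ⟨h.1.symm, h.2.symm⟩⟩
  loopless := ⟨fun u h => h.1 rfl⟩

/-- A strategy profile is valid if no agent buys an edge to herself,
i.e. `S v ⊆ V \ {v}` for every agent `v`. -/
def ValidProfile {V : Type*} (S : V → Finset V) : Prop := ∀ v, v ∉ S v

/-- Sum-version cost of agent `v`: `α·|S_v| + Σ_w d(v,w)` if the induced graph is
connected, and `∞` otherwise. -/
noncomputable def sumCost {V : Type*} [Fintype V] (α : ℝ) (S : V → Finset V) (v : V) : EReal :=
  if (indGraph S).Connected then
    ((α * (S v).card + ∑ w : V, ((indGraph S).dist v w : ℝ) : ℝ) : EReal)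
  else ⊤

/-- Maximum (shortest-path) distance from `v` to any vertex in the induced graph. -/
noncomputable def maxDist {V : Type*} [Fintype V] (S : V → Finset V) (v : V) : ℕ :=
  Finset.univ.sup fun w : V => (indGraph S).dist v w

/-- Max-version cost of agent `v`: `α·|S_v| + max_w d(v,w)` if the induced graph is
connected, and `∞` otherwise. -/
noncomputable def maxCost {V : Type*} [Fintype V] (α : ℝ) (S : V → Finset V) (v : V) : EReal :=
  if (indGraph S).Connected then
    ((α * (S v).card + (maxDist S v : ℝ) : ℝ) : EReal)
  else ⊤

/-- Pure Nash equilibrium w.r.t. an abstract cost function: no agent can strictly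
decrease her cost by unilaterally replacing her strategy with any other valid set. -/
def isNE {V : Type*} [DecidableEq V] (cost : (V → Finset V) → V → EReal)
    (S : V → Finset V) : Prop :=
  ∀ (v : V) (T : Finset V), v ∉ T →
    ¬ cost (Function.update S v T) v < cost S v

/-- Greedy equilibrium: no agent can strictly decrease her cost by adding a single
vertex to her strategy set, removing a single vertex, or exchanging a single vertex
of her set for another vertex. -/
def isGE {V : Type*} [DecidableEq V] (cost : (V → Finset V) → V → EReal)
    (S : V → Finset V) : Prop :=
  (∀ v x : V, x ≠ v → x ∉ S v →
    ¬ cost (Function.update S v (insert x (S v))) v < cost S v) ∧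
  (∀ v x : V, x ∈ S v →
    ¬ cost (Function.update S v ((S v).erase x)) v < cost S v) ∧
  (∀ v x y : V, x ∈ S v → y ≠ v → y ∉ S v →
    ¬ cost (Function.update S v (insert y ((S v).erase x))) v < cost S v)

/-- `β`-approximate Nash equilibrium: every agent's current cost is at most `β` times
the cost of each (hence of the best) unilateral deviation. -/
def isApproxNE {V : Type*} [DecidableEq V] (β : ℝ)
    (cost : (V → Finset V) → V → EReal) (S : V → Finset V) : Prop :=
  ∀ (v : V) (T : Finset V), v ∉ T →
    cost S v ≤ (β : EReal) * cost (Function.update S v T) v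

/-- Diameter of a graph on a finite vertex set. -/
noncomputable def gdiam {V : Type*} [Fintype V] (G : SimpleGraph V) : ℕ :=
  Finset.univ.sup fun p : V × V => G.dist p.1 p.2

/-- `G` is a star: there is a center adjacent to exactly the other vertices,
and there are no other edges. -/
def IsStar {V : Type*} (G : SimpleGraph V) : Prop :=
  ∃ c : V, ∀ a b : V, G.Adj a b ↔ (a = c ∧ b ≠ c) ∨ (b = c ∧ a ≠ c)

/-- A Cheap Star: a Max greedy equilibrium whose induced graph is a star on
`n ≥ 4` vertices with `α < 1/(n-2)`. -/
def CheapStar {V : Type*} [Fintype V] [DecidableEq V] (α : ℝ) (S : V → Finset V) : Prop :=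
  isGE (maxCost α) S ∧ IsStar (indGraph S) ∧ 4 ≤ Fintype.card V ∧
    α < 1 / ((Fintype.card V : ℝ) - 2)

/-- A Badly Connected Tree: a Max greedy equilibrium whose induced graph is a tree and
in which some agent can strictly decrease her cost by simultaneously exchanging `k > 1`
vertices of her strategy set for `k` other vertices (a multi-swap). -/
def BadlyConnectedTree {V : Type*} [Fintype V] [DecidableEq V] (α : ℝ)
    (S : V → Finset V) : Prop :=
  isGE (maxCost α) S ∧ (indGraph S).IsTree ∧
  ∃ (u : V) (X Y : Finset V), X ⊆ S u ∧ (∀ y ∈ Y, y ≠ u ∧ y ∉ S u) ∧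
    1 < X.card ∧ X.card = Y.card ∧
    maxCost α (Function.update S u ((S u \ X) ∪ Y)) u < maxCost α S u

/-- A Cheap Network: a profile that is a Max greedy equilibrium for every
edge price `α'` with `0 < α' ≤ α`. -/
def CheapNetwork {V : Type*} [Fintype V] [DecidableEq V] (α : ℝ)
    (S : V → Finset V) : Prop :=
  0 < α ∧ ∀ α' : ℝ, 0 < α' → α' ≤ α → isGE (maxCost α') S

/-- The induced graph with all edges owned by `u` removed (the forest `T^u`). -/
def minusOwn {V : Type*} (S : V → Finset V) (u : V) : SimpleGraph V where
  Adj a b := (indGraph S).Adj a b ∧ ¬(a = u ∧ b ∈ S u) ∧ ¬(b = u ∧ a ∈ S u)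
  symm := ⟨fun a b h => ⟨h.1.symm, h.2.2, h.2.1⟩⟩
  loopless := ⟨fun a h => (indGraph S).loopless.irrefl a h.1⟩

section Aux

open SimpleGraph

variable {V : Type*} [DecidableEq V]

lemma minusOwn_le (S : V → Finset V) (u : V) : minusOwn S u ≤ indGraph S :=
  fun _ _ h => h.1

lemma indGraph_adj (S : V → Finset V) (a b : V) :
    (indGraph S).Adj a b ↔ a ≠ b ∧ (a ∈ S b ∨ b ∈ S a) := Iff.rfl

lemma minusOwn_adj (S : V → Finset V) (u a b : V) :
    (minusOwn S u).Adj a b ↔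
      ((a ≠ b ∧ (a ∈ S b ∨ b ∈ S a)) ∧ ¬(a = u ∧ b ∈ S u) ∧ ¬(b = u ∧ a ∈ S u)) := Iff.rfl

lemma indGraph_update_adj (S : V → Finset V) (u : V) (R : Finset V)
    (hnd : ∀ b ∈ S u, u ∉ S b) (a b : V) :
    (indGraph (Function.update S u R)).Adj a b ↔
      ((minusOwn S u).Adj a b ∨ (a = u ∧ b ∈ R ∧ b ≠ u) ∨ (b = u ∧ a ∈ R ∧ a ≠ u)) := by
  have h1 : u ∈ S b → b ∉ S u := fun h hb' => hnd b hb' h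
  have h2 : u ∈ S a → a ∉ S u := fun h ha' => hnd a ha' h
  rw [indGraph_adj, minusOwn_adj, Function.update_apply, Function.update_apply]
  by_cases ha : a = u <;> by_cases hb : b = u <;> simp [ha, hb] <;> tauto

end Aux
lemma sumGE_nodouble {V : Type*} [Fintype V] [DecidableEq V] (α : ℝ) (hα : 0 < α)
    (S : V → Finset V) (hGE : isGE (sumCost α) S)
    (hconn : (indGraph S).Connected)
    {u b : V} (hb : b ∈ S u) : u ∉ S b := by
  intro hub
  refine hGE.2.1 u b hb ?_
  have hEq : indGraph (Function.update S u ((S u).erase b)) = indGraph S := by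
    ext a c
    rw [indGraph_adj, indGraph_adj, Function.update_apply, Function.update_apply]
    by_cases ha : a = u <;> by_cases hc : c = u <;>
      simp [ha, hc, Finset.mem_erase] <;>
      first
        | tauto
        | (by_cases hcb : c = b <;> simp_all <;> tauto)
        | (by_cases hab : a = b <;> simp_all <;> tauto)
  unfold sumCost
  rw [hEq, if_pos hconn, if_pos hconn, Function.update_self]
  rw [EReal.coe_lt_coe_iff]
  have hcard : ((S u).erase b).card = (S u).card - 1 := Finset.card_erase_of_mem hb
  have hpos : 1 ≤ (S u).card := Finset.card_pos.mpr ⟨b, hb⟩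
  have : (((S u).erase b).card : ℝ) = ((S u).card : ℝ) - 1 := by
    rw [hcard]; push_cast [hpos]; ring
  rw [this]
  nlinarith [hα]
open SimpleGraph in
lemma attach_spec {V : Type*} [DecidableEq V] (S : V → Finset V) (u : V)
    (hnd : ∀ b ∈ S u, u ∉ S b) (R : Finset V) (huR : u ∉ R)
    (hout : ∀ x ∈ R, ¬ (minusOwn S u).Reachable u x)
    (hone : ∀ x ∈ R, ∀ y ∈ R, (minusOwn S u).Reachable x y → x = y)
    (rep : V → V)
    (hrep : ∀ w, ¬ (minusOwn S u).Reachable u w →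
      rep w ∈ R ∧ (minusOwn S u).Reachable w (rep w)) :
    (∀ w, (indGraph (Function.update S u R)).Reachable u w) ∧
    (∀ w, (indGraph (Function.update S u R)).dist u w =
      if (minusOwn S u).Reachable u w then (minusOwn S u).dist u w
      else (minusOwn S u).dist (rep w) w + 1) := by
  set M := minusOwn S u with hM
  set G' := indGraph (Function.update S u R) with hG'
  set e : V → ℕ := fun x =>
    if M.Reachable u x then M.dist u x else M.dist (rep x) x + 1 with he
  have hle : M ≤ G' := by
    intro a b h
    exact (indGraph_update_adj S u R hnd a b).mpr (Or.inl h)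
  have hadjR : ∀ r ∈ R, G'.Adj u r := by
    intro r hr
    have hru : r ≠ u := fun h => huR (h ▸ hr)
    exact (indGraph_update_adj S u R hnd u r).mpr (Or.inr (Or.inl ⟨rfl, hr, hru⟩))
  -- upper bound walks
  have upper : ∀ w, ∃ p : G'.Walk u w, p.length = e w := by
    intro w
    by_cases h : M.Reachable u w
    · obtain ⟨p, hp⟩ := h.exists_walk_length_eq_dist
      exact ⟨p.mapLe hle, by simp [Walk.mapLe, Walk.length_map, hp, he, h]⟩
    · obtain ⟨hR, hreach⟩ := hrep w h
      obtain ⟨p, hp⟩ := hreach.symm.exists_walk_length_eq_dist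
      refine ⟨Walk.cons (hadjR _ hR) (p.mapLe hle), ?_⟩
      simp [Walk.mapLe, Walk.length_map, hp, he, h]
  have ereach : ∀ x, M.Reachable u x → e x = M.dist u x := fun x h => if_pos h
  have h0 : e u = 0 := by
    have hr : M.Reachable u u := SimpleGraph.Reachable.refl u
    simp [he, hr, M.dist_self]
  -- Lipschitz property
  have Lip : ∀ a b : V, G'.Adj a b → e a ≤ e b + 1 := by
    intro a b hab
    rcases (indGraph_update_adj S u R hnd a b).mp hab with hMab | ⟨ha, hbR, hbu⟩ | ⟨hb, haR, hau⟩
    · by_cases hb' : M.Reachable u b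
      · have ha' : M.Reachable u a := hb'.trans hMab.symm.reachable
        rw [ereach a ha', ereach b hb']
        obtain ⟨p, hp⟩ := hb'.exists_walk_length_eq_dist
        have := M.dist_le (p.concat hMab.symm)
        rwa [Walk.length_concat, hp] at this
      · have ha' : ¬ M.Reachable u a := fun h => hb' (h.trans hMab.reachable)
        have hrr : rep a = rep b :=
          hone _ (hrep a ha').1 _ (hrep b hb').1
            (((hrep a ha').2.symm.trans hMab.reachable).trans (hrep b hb').2)
        simp only [he, if_neg ha', if_neg hb']
        obtain ⟨p, hp⟩ := (hrep b hb').2.symm.exists_walk_length_eq_dist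
        have := M.dist_le (p.concat hMab.symm)
        rw [Walk.length_concat, hp] at this
        rw [hrr]
        omega
    · rw [ha]
      omega
    · rw [hb]
      have ha' : ¬ M.Reachable u a := hout a haR
      have hra : rep a = a := hone _ (hrep a ha').1 _ haR (hrep a ha').2.symm
      have h1 : e a = 1 := by simp [he, if_neg ha', hra, M.dist_self]
      omega
  -- lower bound
  have lower : ∀ (a b : V) (p : G'.Walk a b), e b ≤ e a + p.length := by
    intro a b p
    induction p with
    | nil => simp
    | @cons a c b h q ih =>
      have h1 := Lip c a h.symm
      have h2 : (Walk.cons h q).length = q.length + 1 := Walk.length_cons ..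
      omega
  have reach : ∀ w, G'.Reachable u w := fun w => ⟨(upper w).choose⟩
  refine ⟨reach, fun w => ?_⟩
  have hdle : G'.dist u w ≤ e w := by
    obtain ⟨p, hp⟩ := upper w
    simpa [hp] using G'.dist_le p
  have hdge : e w ≤ G'.dist u w := by
    obtain ⟨p, hp⟩ := (reach w).exists_walk_length_eq_dist
    have := lower u w p
    omega
  have : G'.dist u w = e w := le_antisymm hdle hdge
  rw [this]
open SimpleGraph in
lemma tree_comp_out {V : Type*} [DecidableEq V] (S : V → Finset V)
    (hS : ValidProfile S) (htree : (indGraph S).IsTree) (u : V) :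
    ∀ x ∈ S u, ¬ (minusOwn S u).Reachable u x := by
  intro x hx h
  have hux : u ≠ x := fun h' => hS u (h' ▸ hx)
  obtain ⟨q0⟩ := h.symm
  let q := q0.toPath
  have hsub : ∀ e ∈ q.val.edges, e ∈ (indGraph S).edgeSet := fun e he =>
    (SimpleGraph.edgeSet_mono (minusOwn_le S u)) (q.val.edges_subset_edgeSet he)
  let q' : (indGraph S).Walk x u := q.val.transfer _ hsub
  have hq'path : q'.IsPath := q.prop.transfer hsub
  have hadj : (indGraph S).Adj u x := ⟨hux, Or.inr hx⟩
  have hcyc : (Walk.cons hadj q').IsCycle := by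
    rw [Walk.cons_isCycle_iff]
    refine ⟨hq'path, fun hmem => ?_⟩
    rw [Walk.edges_transfer] at hmem
    have : (minusOwn S u).Adj u x := q.val.adj_of_mem_edges hmem
    exact this.2.1 ⟨rfl, hx⟩
  exact htree.IsAcyclic _ hcyc

open SimpleGraph in
lemma tree_comp_one {V : Type*} [DecidableEq V] (S : V → Finset V)
    (hS : ValidProfile S) (htree : (indGraph S).IsTree) (u : V) :
    ∀ x ∈ S u, ∀ y ∈ S u, (minusOwn S u).Reachable x y → x = y := by
  intro x hx y hy h
  by_contra hne
  have hux : u ≠ x := fun h' => hS u (h' ▸ hx)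
  have huy : u ≠ y := fun h' => hS u (h' ▸ hy)
  obtain ⟨q0⟩ := h
  let q := q0.toPath
  have husup : u ∉ q.val.support := by
    intro hmem
    exact tree_comp_out S hS htree u x hx ⟨(q.val.takeUntil u hmem).reverse⟩
  have hsub : ∀ e ∈ q.val.edges, e ∈ (indGraph S).edgeSet := fun e he =>
    (SimpleGraph.edgeSet_mono (minusOwn_le S u)) (q.val.edges_subset_edgeSet he)
  let q' : (indGraph S).Walk y x := (q.val.transfer _ hsub).reverse
  have hq'path : q'.IsPath := (q.prop.transfer hsub).reverse
  have hadjuy : (indGraph S).Adj u y := ⟨huy, Or.inr hy⟩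
  have hadjxu : (indGraph S).Adj x u := ⟨fun h' => hux h'.symm, Or.inl hx⟩
  have hinner : (Walk.cons hadjuy q').IsPath := by
    rw [Walk.cons_isPath_iff]
    refine ⟨hq'path, fun hmem => ?_⟩
    apply husup
    have : u ∈ (q.val.transfer _ hsub).support := by
      rwa [Walk.support_reverse, List.mem_reverse] at hmem
    rwa [Walk.support_transfer] at this
  have hcyc : (Walk.cons hadjxu (Walk.cons hadjuy q')).IsCycle := by
    rw [Walk.cons_isCycle_iff]
    refine ⟨hinner, fun hmem => ?_⟩
    rw [Walk.edges_cons] at hmem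
    rcases List.mem_cons.mp hmem with heq | hmem'
    · rw [Sym2.eq_iff] at heq
      rcases heq with ⟨h1, h2⟩ | ⟨h1, h2⟩
      · exact hux h1.symm
      · exact hne h1
    · have hu : u ∈ q'.support := Walk.snd_mem_support_of_mem_edges q' hmem'
      apply husup
      have : u ∈ (q.val.transfer _ hsub).support := by
        rwa [Walk.support_reverse, List.mem_reverse] at hu
      rwa [Walk.support_transfer] at this
  exact htree.IsAcyclic _ hcyc
open SimpleGraph in
lemma tree_comp_cover {V : Type*} [DecidableEq V] (S : V → Finset V)
    (hS : ValidProfile S) (htree : (indGraph S).IsTree) (u : V) :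
    ∀ w, ¬ (minusOwn S u).Reachable u w → ∃ x ∈ S u, (minusOwn S u).Reachable w x := by
  intro w hw
  have hne : u ≠ w := fun h => hw (h ▸ SimpleGraph.Reachable.refl u)
  obtain ⟨p0⟩ := htree.isConnected.preconnected u w
  obtain ⟨x, hadj, q, heq⟩ := Walk.exists_eq_cons_of_ne hne p0.toPath.val
  have hp := p0.toPath.prop
  rw [heq, Walk.cons_isPath_iff] at hp
  obtain ⟨hqpath, husup⟩ := hp
  have hsub : ∀ e ∈ q.edges, e ∈ (minusOwn S u).edgeSet := by
    intro e he
    induction e with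
    | h a b =>
      have hG : (indGraph S).Adj a b := q.adj_of_mem_edges he
      have hau : a ≠ u := fun h =>
        husup (h ▸ Walk.fst_mem_support_of_mem_edges q he)
      have hbu : b ≠ u := fun h =>
        husup (h ▸ Walk.snd_mem_support_of_mem_edges q he)
      exact ⟨hG, fun h' => hau h'.1, fun h' => hbu h'.1⟩
  have hreach : (minusOwn S u).Reachable x w := ⟨q.transfer _ hsub⟩
  refine ⟨x, ?_, hreach.symm⟩
  by_contra hx
  apply hw
  have hMadj : (minusOwn S u).Adj u x :=
    ⟨hadj, fun h' => hx h'.2, fun h' => hadj.ne h'.1.symm⟩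
  exact hMadj.reachable.trans hreach

/-- In a Sum greedy equilibrium on a tree, agent `u`'s current strategy
has minimum cost among all strategies buying exactly one edge into each component of
`F^u` (the components of `T^u` other than `u`'s own) and no other edges. -/
theorem sumGE_tree_greedy_strategy_optimal {V : Type*} [Fintype V] [DecidableEq V]
    (α : ℝ) (hα : 0 < α) (S : V → Finset V) (hS : ValidProfile S)
    (hn : 2 ≤ Fintype.card V)
    (hGE : isGE (sumCost α) S) (htree : (indGraph S).IsTree)
    (u : V) (T : Finset V) (huT : u ∉ T)
    (hbuy_out : ∀ x ∈ T, ¬ (minusOwn S u).Reachable u x)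
    (h_at_most_one : ∀ x ∈ T, ∀ y ∈ T, (minusOwn S u).Reachable x y → x = y)
    (h_at_least_one : ∀ x : V, ¬ (minusOwn S u).Reachable u x →
      ∃ y ∈ T, (minusOwn S u).Reachable x y) :
    sumCost α S u ≤ sumCost α (Function.update S u T) u := by
  classical
  set M := minusOwn S u with hM
  have hconn : (indGraph S).Connected := htree.isConnected
  have hnd : ∀ b ∈ S u, u ∉ S b := fun b hb => sumGE_nodouble α hα S hGE hconn hb
  have houtS := tree_comp_out S hS htree u
  have honeS := tree_comp_one S hS htree u
  have hcovS := tree_comp_cover S hS htree u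
  -- representative functions
  let repT : V → V := fun w => if h : ¬ M.Reachable u w then (h_at_least_one w h).choose else u
  have hrepT : ∀ w, ¬ M.Reachable u w → repT w ∈ T ∧ M.Reachable w (repT w) := by
    intro w h
    have hspec := (h_at_least_one w h).choose_spec
    simp only [repT, dif_pos h]
    exact hspec
  let repS : V → V := fun w => if h : ¬ M.Reachable u w then (hcovS w h).choose else u
  have hrepS : ∀ w, ¬ M.Reachable u w → repS w ∈ S u ∧ M.Reachable w (repS w) := by
    intro w h
    have hspec := (hcovS w h).choose_spec
    simp only [repS, dif_pos h]
    exact hspec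
  -- distance formulas
  obtain ⟨reachT, distT⟩ := attach_spec S u hnd T huT hbuy_out h_at_most_one repT hrepT
  obtain ⟨reachS, distS⟩ := attach_spec S u hnd (S u) (hS u) houtS honeS repS hrepS
  rw [Function.update_eq_self u S] at reachS distS
  have hconnT : (indGraph (Function.update S u T)).Connected := by
    rw [SimpleGraph.connected_iff]
    exact ⟨fun a b => (reachT a).symm.trans (reachT b), ⟨u⟩⟩
  -- the sum decomposition
  set U : Finset V := Finset.univ.filter (fun w => ¬ M.Reachable u w) with hU
  set B : ℕ := ∑ w ∈ Finset.univ.filter (fun w => M.Reachable u w), M.dist u w with hB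
  have hsum : ∀ (G : SimpleGraph V) (r : V → V),
      (∀ w, M.Reachable u w → G.dist u w = M.dist u w) →
      (∀ w, ¬ M.Reachable u w → G.dist u w = M.dist (r w) w + 1) →
      ∑ w : V, G.dist u w = B + ∑ w ∈ U, (M.dist (r w) w + 1) := by
    intro G r hd1 hd2
    rw [← Finset.sum_filter_add_sum_filter_not Finset.univ (fun w => M.Reachable u w)
      (fun w => G.dist u w)]
    congr 1
    · exact Finset.sum_congr rfl fun w hw => hd1 w (Finset.mem_filter.mp hw).2
    · exact Finset.sum_congr rfl fun w hw => hd2 w (Finset.mem_filter.mp hw).2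
  -- cardinalities agree
  have hcard : T.card = (S u).card := by
    apply Finset.card_bij (fun a _ => repS a)
    · intro a ha
      exact (hrepS a (hbuy_out a ha)).1
    · intro a ha b hb hab
      have h1 := (hrepS a (hbuy_out a ha)).2
      have h2 := (hrepS b (hbuy_out b hb)).2
      exact h_at_most_one a ha b hb (h1.trans (hab ▸ h2.symm))
    · intro x hx
      obtain ⟨t, ht, htx⟩ := h_at_least_one x (houtS x hx)
      refine ⟨t, ht, ?_⟩
      have h1 := (hrepS t (hbuy_out t ht)).2
      exact honeS _ (hrepS t (hbuy_out t ht)).1 _ hx (h1.symm.trans htx.symm)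
  -- the key per-component inequality, from the greedy (swap) equilibrium property
  have key : ∀ t ∈ T, ∑ w ∈ U.filter (fun w => M.Reachable w t), M.dist (repS w) w ≤
      ∑ w ∈ U.filter (fun w => M.Reachable w t), M.dist t w := by
    intro t ht
    have htu' : ¬ M.Reachable u t := hbuy_out t ht
    set x := repS t with hx
    have hxSu : x ∈ S u := (hrepS t htu').1
    have htx : M.Reachable t x := (hrepS t htu').2
    by_cases hteq : t = x
    · apply le_of_eq
      apply Finset.sum_congr rfl
      intro w hw
      have hwr : M.Reachable w t := (Finset.mem_filter.mp hw).2
      have hwu : ¬ M.Reachable u w :=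
        (Finset.mem_filter.mp (Finset.mem_filter.mp hw).1).2
      have hrw : repS w = x :=
        honeS _ (hrepS w hwu).1 _ hxSu ((hrepS w hwu).2.symm.trans (hwr.trans htx))
      rw [hrw, ← hteq]
    · have htu : t ≠ u := fun h => huT (h ▸ ht)
      have htSu : t ∉ S u := fun h => hteq (honeS t h x hxSu htx)
      set R' : Finset V := insert t ((S u).erase x) with hR'
      have huR' : u ∉ R' := by
        rw [hR', Finset.mem_insert]
        rintro (h | h)
        · exact htu h.symm
        · exact hS u (Finset.mem_of_mem_erase h)
      have hout' : ∀ y ∈ R', ¬ M.Reachable u y := by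
        intro y hy
        rcases Finset.mem_insert.mp hy with rfl | hy'
        · exact htu'
        · exact houtS y (Finset.mem_of_mem_erase hy')
      have hone' : ∀ a ∈ R', ∀ b ∈ R', M.Reachable a b → a = b := by
        intro a ha b hb hab
        rcases Finset.mem_insert.mp ha with rfl | ha' <;>
          rcases Finset.mem_insert.mp hb with rfl | hb'
        · rfl
        · exact absurd (honeS b (Finset.mem_of_mem_erase hb') x hxSu
            (hab.symm.trans htx)) (Finset.ne_of_mem_erase hb')
        · exact absurd (honeS a (Finset.mem_of_mem_erase ha') x hxSu
            (hab.trans htx)) (Finset.ne_of_mem_erase ha')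
        · exact honeS a (Finset.mem_of_mem_erase ha') b (Finset.mem_of_mem_erase hb') hab
      set rep' : V → V := fun w => if M.Reachable w t then t else repS w with hrep'def
      have hrep' : ∀ w, ¬ M.Reachable u w → rep' w ∈ R' ∧ M.Reachable w (rep' w) := by
        intro w hw
        by_cases hwt : M.Reachable w t
        · simp only [hrep'def, if_pos hwt]
          exact ⟨Finset.mem_insert_self t _, hwt⟩
        · simp only [hrep'def, if_neg hwt]
          refine ⟨Finset.mem_insert_of_mem (Finset.mem_erase.mpr ⟨?_, (hrepS w hw).1⟩),
            (hrepS w hw).2⟩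
          intro heq
          exact hwt ((heq ▸ (hrepS w hw).2).trans htx.symm)
      obtain ⟨reachR, distR⟩ := attach_spec S u hnd R' huR' hout' hone' rep' hrep'
      have hconnR : (indGraph (Function.update S u R')).Connected := by
        rw [SimpleGraph.connected_iff]
        exact ⟨fun a b => (reachR a).symm.trans (reachR b), ⟨u⟩⟩
      have hcardR : R'.card = (S u).card := by
        rw [hR', Finset.card_insert_of_notMem (fun h => htSu (Finset.mem_of_mem_erase h)),
          Finset.card_erase_of_mem hxSu]
        have : 1 ≤ (S u).card := Finset.card_pos.mpr ⟨x, hxSu⟩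
        omega
      have hge := hGE.2.2 u x t hxSu htu htSu
      rw [not_lt] at hge
      unfold sumCost at hge
      rw [if_pos hconn, if_pos hconnR, Function.update_self, EReal.coe_le_coe_iff] at hge
      have hRsum := hsum (indGraph (Function.update S u R')) rep'
        (fun w h => (distR w).trans (if_pos h)) (fun w h => (distR w).trans (if_neg h))
      have hSsum := hsum (indGraph S) repS
        (fun w h => (distS w).trans (if_pos h)) (fun w h => (distS w).trans (if_neg h))
      rw [← Nat.cast_sum, ← Nat.cast_sum, hSsum, hRsum, hcardR] at hge
      have hge2 : B + ∑ w ∈ U, (M.dist (repS w) w + 1) ≤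
          B + ∑ w ∈ U, (M.dist (rep' w) w + 1) := by
        have h1 := (add_le_add_iff_left (α * ((S u).card : ℝ))).mp hge
        exact_mod_cast h1
      rw [Finset.sum_add_distrib, Finset.sum_add_distrib] at hge2
      have hge3 : ∑ w ∈ U, M.dist (repS w) w ≤ ∑ w ∈ U, M.dist (rep' w) w := by omega
      rw [← Finset.sum_filter_add_sum_filter_not U (fun w => M.Reachable w t)
            (fun w => M.dist (repS w) w),
          ← Finset.sum_filter_add_sum_filter_not U (fun w => M.Reachable w t)
            (fun w => M.dist (rep' w) w)] at hge3
      have hcompl : ∑ w ∈ U.filter (fun w => ¬ M.Reachable w t), M.dist (rep' w) w =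
          ∑ w ∈ U.filter (fun w => ¬ M.Reachable w t), M.dist (repS w) w :=
        Finset.sum_congr rfl fun w hw => by
          simp only [hrep'def, if_neg (Finset.mem_filter.mp hw).2]
      have hfil : ∑ w ∈ U.filter (fun w => M.Reachable w t), M.dist (rep' w) w =
          ∑ w ∈ U.filter (fun w => M.Reachable w t), M.dist t w :=
        Finset.sum_congr rfl fun w hw => by
          simp only [hrep'def, if_pos (Finset.mem_filter.mp hw).2]
      rw [hcompl, hfil] at hge3
      omega
  -- assemble
  unfold sumCost
  rw [if_pos hconn, if_pos hconnT, Function.update_self, EReal.coe_le_coe_iff]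
  have hSsum := hsum (indGraph S) repS
    (fun w h => (distS w).trans (if_pos h)) (fun w h => (distS w).trans (if_neg h))
  have hTsum := hsum (indGraph (Function.update S u T)) repT
    (fun w h => (distT w).trans (if_pos h)) (fun w h => (distT w).trans (if_neg h))
  have hmain : ∑ w ∈ U, (M.dist (repS w) w + 1) ≤ ∑ w ∈ U, (M.dist (repT w) w + 1) := by
    rw [Finset.sum_add_distrib, Finset.sum_add_distrib]
    apply Nat.add_le_add_right
    have hmapsS : ∀ w ∈ U, repT w ∈ T := fun w hw =>
      (hrepT w (Finset.mem_filter.mp hw).2).1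
    rw [← Finset.sum_fiberwise_of_maps_to hmapsS (fun w => M.dist (repS w) w),
        ← Finset.sum_fiberwise_of_maps_to hmapsS (fun w => M.dist (repT w) w)]
    apply Finset.sum_le_sum
    intro t ht
    have hfib : U.filter (fun w => repT w = t) = U.filter (fun w => M.Reachable w t) := by
      apply Finset.filter_congr
      intro w hw
      have hw' : ¬ M.Reachable u w := (Finset.mem_filter.mp hw).2
      constructor
      · intro h; exact h ▸ (hrepT w hw').2
      · intro h
        exact h_at_most_one _ (hrepT w hw').1 _ ht ((hrepT w hw').2.symm.trans h)
    rw [hfib]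
    refine le_trans (key t ht) (le_of_eq ?_)
    apply Finset.sum_congr rfl
    intro w hw
    have hwU : w ∈ U := (Finset.mem_filter.mp hw).1
    have hwr : M.Reachable w t := (Finset.mem_filter.mp hw).2
    have hwu : ¬ M.Reachable u w := (Finset.mem_filter.mp hwU).2
    have hrt : repT w = t :=
      h_at_most_one _ (hrepT w hwu).1 _ ht ((hrepT w hwu).2.symm.trans hwr)
    rw [hrt]
  rw [← Nat.cast_sum, ← Nat.cast_sum, hSsum, hTsum, hcard]
  have hc := (Nat.cast_le (α := ℝ)).mpr (Nat.add_le_add_left hmain B)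
  linarith
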